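/- For every regular expression α, follow(α*, x) = follow(α, x) ∪ first(α) for all x ∈ last(α), and follow(α*, x) = follow(α, x) for x ∈ Pos(α)∖last(α). -/
import Mathlib


open RegularExpression
open scoped Classical

variable {σ : Type*}

/-- Alphabetic size: number of letter occurrences. -/
def alph : RegularExpression σ → ℕ
  | zero => 0
  | epsilon => 0
  | char _ => 1
  | plus P Q => alph P + alph Q
  | comp P Q => alph P + alph Q
  | RegularExpression.star P => alph P

/-- Mark every letter occurrence with its position; `n` is the number of
positions used so far (positions are `n+1, n+2, …`). -/
def mark : RegularExpression σ → ℕ → RegularExpression (σ × ℕ)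
  | zero, _ => zero
  | epsilon, _ => epsilon
  | char a, n => char (a, n + 1)
  | plus P Q, n => plus (mark P n) (mark Q (n + alph P))
  | comp P Q, n => comp (mark P n) (mark Q (n + alph P))
  | RegularExpression.star P, n => RegularExpression.star (mark P n)

/-- The marked version `ᾱ` of `α`, with positions `1, …, |α|_Σ`. -/
def marked (α : RegularExpression σ) : RegularExpression (σ × ℕ) :=
  mark α 0

/-- `first(α)`: positions that can begin a word of `L(ᾱ)`. -/
def first (α : RegularExpression σ) : Set ℕ :=
  {j | ∃ a w, ((a, j) :: w) ∈ (marked α).matches'}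

/-- `last(α)`: positions that can end a word of `L(ᾱ)`. -/
def last (α : RegularExpression σ) : Set ℕ :=
  {j | ∃ a w, (w ++ [(a, j)]) ∈ (marked α).matches'}

/-- `follow(α,i)`: positions that can follow position `i` in a word of `L(ᾱ)`,
with `follow(α,0) = first(α)`. -/
def follow (α : RegularExpression σ) (i : ℕ) : Set ℕ :=
  if i = 0 then first α
  else {j | ∃ a b u v, (u ++ (a, i) :: (b, j) :: v) ∈ (marked α).matches'}

/-- The letter occurring at position `j` (1-indexed) of `α`, if any. -/
def letterAt : RegularExpression σ → ℕ → Option σ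
  | zero, _ => none
  | epsilon, _ => none
  | char a, j => if j = 1 then some a else none
  | plus P Q, j => if j ≤ alph P then letterAt P j else letterAt Q (j - alph P)
  | comp P Q, j => if j ≤ alph P then letterAt P j else letterAt Q (j - alph P)
  | RegularExpression.star P, j => letterAt P j

/-- `Pos₀(α) = {0, 1, …, |α|_Σ}` as a type. -/
def Pos0 (α : RegularExpression σ) : Type _ := {i : ℕ // i ≤ alph α}

/-- The final-state set: `last(α) ∪ {0}` if `ε ∈ L(α)`, else `last(α)`. -/

noncomputable def lastZero (α : RegularExpression σ) : Set ℕ :=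
  if [] ∈ α.matches' then last α ∪ {0} else last α

/-- The Glushkov position automaton of `α`. -/
noncomputable def posNFA (α : RegularExpression σ) : NFA σ (Pos0 α) where
  step := fun i a => {j | j.1 ∈ follow α i.1 ∧ letterAt α j.1 = some a}
  start := {i | i.1 = 0}
  accept := {i | i.1 ∈ lastZero α}

/-- `Pos(α) = {1, …, |α|_Σ}`. -/
def Pos (α : RegularExpression σ) : Set ℕ := {j | 1 ≤ j ∧ j ≤ alph α}


theorem head_of_flatten {β : Type*} : ∀ (S : List (List β)) (q : β) (v : List β),
    S.flatten = q :: v → ∃ s ∈ S, ∃ v', s = q :: v' := by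
  intro S
  induction S with
  | nil => intro q v h; simp at h
  | cons s S ih =>
    intro q v h
    match s, h with
    | [], h => obtain ⟨t, ht, h'⟩ := ih q v (by simpa using h); exact ⟨t, by simp [ht], h'⟩
    | a :: s, h =>
      simp at h
      exact ⟨a :: s, by simp, s, by simp [h.1]⟩

theorem adj_of_flatten {β : Type*} : ∀ (S : List (List β)) (u v : List β) (p q : β),
    S.flatten = u ++ p :: q :: v →
    (∃ s ∈ S, ∃ u' v', s = u' ++ p :: q :: v') ∨
    ((∃ s ∈ S, ∃ u', s = u' ++ [p]) ∧ ∃ t ∈ S, ∃ v', t = q :: v') := by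
  intro S
  induction S with
  | nil => intro u v p q h; simp at h
  | cons s S ih =>
    intro u v p q h
    simp only [List.flatten_cons] at h
    rcases List.append_eq_append_iff.mp h with ⟨a', hu, hS⟩ | ⟨c', hs, hc⟩
    · rcases ih a' v p q hS with ⟨t, ht, h'⟩ | ⟨⟨t, ht, h1⟩, t2, ht2, h2⟩
      · exact Or.inl ⟨t, by simp [ht], h'⟩
      · exact Or.inr ⟨⟨t, by simp [ht], h1⟩, t2, by simp [ht2], h2⟩
    · match c', hc with
      | [], hc =>
        rcases ih [] v p q (by simpa using hc.symm) with ⟨t, ht, h'⟩ | ⟨⟨t, ht, h1⟩, t2, ht2, h2⟩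
        · exact Or.inl ⟨t, by simp [ht], h'⟩
        · exact Or.inr ⟨⟨t, by simp [ht], h1⟩, t2, by simp [ht2], h2⟩
      | [y], hc =>
        simp at hc
        obtain ⟨t, ht, h'⟩ := head_of_flatten S q v hc.2.symm
        exact Or.inr ⟨⟨s, by simp, u, by rw [hs, hc.1]⟩, t, by simp [ht], h'⟩
      | y :: z :: c', hc =>
        simp at hc
        exact Or.inl ⟨s, by simp, u, c', by rw [hs, hc.1, hc.2.1]⟩

theorem pos_pos : ∀ (α : RegularExpression σ) (n : ℕ) (w : List (σ × ℕ)),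
    w ∈ (mark α n).matches' → ∀ p ∈ w, 1 ≤ p.2 := by
  intro α
  induction α with
  | zero => intro n w h; simp [mark, matches'_zero] at h
  | epsilon => intro n w h p hp; simp [mark, matches'_epsilon] at h; subst h; simp at hp
  | char a => intro n w h p hp; simp [mark, matches'_char] at h; subst h; simp at hp; simp [hp]
  | plus P Q ihP ihQ =>
    intro n w h p hp
    simp only [mark, matches'_add, Language.mem_add] at h
    rcases h with h | h
    · exact ihP _ _ h p hp
    · exact ihQ _ _ h p hp
  | comp P Q ihP ihQ =>
    intro n w h p hp
    simp only [mark, matches'_mul] at h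
    obtain ⟨a, ha, b, hb, hab⟩ := Language.mem_mul.mp h
    subst hab
    rcases List.mem_append.mp hp with hp | hp
    · exact ihP _ _ ha p hp
    · exact ihQ _ _ hb p hp
  | star P ih =>
    intro n w h p hp
    simp only [mark, matches'_star] at h
    obtain ⟨S, rfl, hS⟩ := Language.mem_kstar.mp h
    obtain ⟨s, hs, hps⟩ := List.mem_flatten.mp hp
    exact ih _ _ (hS s hs) p hps

theorem last_ne_zero {α : RegularExpression σ} {x : ℕ} (h : x ∈ last α) : x ≠ 0 := by
  obtain ⟨a, w, hw⟩ := h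
  have := pos_pos α 0 _ hw (a, x) (by simp)
  omega

theorem marked_star (α : RegularExpression σ) :
    marked (RegularExpression.star α) = RegularExpression.star (marked α) := rfl

theorem follow_star_sub {α : RegularExpression σ} {x j : ℕ} (hx : x ≠ 0)
    (hj : j ∈ follow (RegularExpression.star α) x) :
    j ∈ follow α x ∨ (x ∈ last α ∧ j ∈ first α) := by
  rw [follow, if_neg hx] at hj
  obtain ⟨a, b, u, v, h⟩ := hj
  rw [marked_star, matches'_star, Language.mem_kstar] at h
  obtain ⟨S, hS, hall⟩ := h
  rcases adj_of_flatten S u v (a, x) (b, j) hS.symm with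
    ⟨s, hsS, u', v', hseq⟩ | ⟨⟨s, hsS, u', hseq⟩, t, htS, v', hteq⟩
  · left
    rw [follow, if_neg hx]
    exact ⟨a, b, u', v', hseq ▸ hall s hsS⟩
  · right
    exact ⟨⟨a, u', hseq ▸ hall s hsS⟩, ⟨b, v', hteq ▸ hall t htS⟩⟩

theorem follow_sub_follow_star {α : RegularExpression σ} {x : ℕ} (hx : x ≠ 0) :
    follow α x ⊆ follow (RegularExpression.star α) x := by
  intro j hj
  rw [follow, if_neg hx] at hj ⊢
  obtain ⟨a, b, u, v, h⟩ := hj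
  refine ⟨a, b, u, v, ?_⟩
  rw [marked_star, matches'_star, Language.mem_kstar]
  exact ⟨[u ++ (a, x) :: (b, j) :: v], by simp, by simpa using h⟩

theorem first_sub_follow_star {α : RegularExpression σ} {x : ℕ} (hx : x ≠ 0)
    (hlast : x ∈ last α) : first α ⊆ follow (RegularExpression.star α) x := by
  intro j hj
  obtain ⟨a, w, hw⟩ := hlast
  obtain ⟨b, w', hw'⟩ := hj
  rw [follow, if_neg hx]
  refine ⟨a, b, w, w', ?_⟩
  rw [marked_star, matches'_star, Language.mem_kstar]
  refine ⟨[w ++ [(a, x)], (b, j) :: w'], by simp, ?_⟩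
  intro y hy
  simp only [List.mem_cons, List.not_mem_nil, or_false] at hy
  rcases hy with rfl | rfl
  · exact hw
  · exact hw'

/-- `follow(α*,x) = follow(α,x) ∪ first(α)` for `x ∈ last(α)` and
`follow(α*,x) = follow(α,x)` for `x ∈ Pos(α) ∖ last(α)`. -/
theorem follow_star (α : RegularExpression σ) (x : ℕ) :
    (x ∈ last α → follow (RegularExpression.star α) x = follow α x ∪ first α) ∧
    (x ∈ Pos α \ last α → follow (RegularExpression.star α) x = follow α x) := by
  constructor
  · intro hx
    have hx0 : x ≠ 0 := last_ne_zero hx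
    ext j
    constructor
    · intro hj
      rcases follow_star_sub hx0 hj with h | ⟨_, h⟩
      · exact Or.inl h
      · exact Or.inr h
    · intro hj
      rcases hj with hj | hj
      · exact follow_sub_follow_star hx0 hj
      · exact first_sub_follow_star hx0 hx hj
  · intro ⟨hpos, hnl⟩
    have hx0 : x ≠ 0 := by have := hpos.1; omega
    ext j
    constructor
    · intro hj
      rcases follow_star_sub hx0 hj with h | ⟨h, _⟩
      · exact h
      · exact absurd h hnl
    · intro hj
      exact follow_sub_follow_star hx0 hj
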